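/- arXiv:1704.02275 — 2 statements merged into one kernel-verified Lean document; each statement's English description precedes it below -/
import Mathlib

section
/- For any real q > 0 and p > 0, ∫₀^∞ x·arctan(qx)/(p² + x²)² dx = πq/(4p(1+pq)). -/
/-!
Integrating by parts against `d(-1 / (2 (p² + x²)))` turns the integral into
`(q / 2) ∫₀^∞ dx / ((p² + x²)(1 + q²x²))`, and this integral equals `π / (2p(1 + pq))`: for
`pq ≠ 1` by partial fractions, which produce `arctan (x / p) / p - q arctan (q x)` over
`1 - p²q²`, and for `pq = 1` (where that denominator vanishes) from the classical primitive of
`1 / (p² + x²)²`. Since the integrand is nonnegative, the improper fundamental theorem of calculus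
needs only the primitive and its limit, and integrability comes for free.
-/

open Real MeasureTheory Filter Topology

lemma tendsto_arctan_const_mul_atTop {c : ℝ} (hc : 0 < c) :
    Tendsto (fun x => arctan (c * x)) atTop (𝓝 (π / 2)) :=
  (tendsto_nhds_of_tendsto_nhdsWithin tendsto_arctan_atTop).comp (tendsto_id.const_mul_atTop hc)

lemma tendsto_div_sq_add_sq_atTop (p : ℝ) :
    Tendsto (fun x : ℝ => x / (p ^ 2 + x ^ 2)) atTop (𝓝 0) := by
  have h : Tendsto (fun x : ℝ => x + p ^ 2 / x) atTop atTop :=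
    tendsto_id.atTop_add (tendsto_const_nhds.div_atTop tendsto_id)
  refine h.inv_tendsto_atTop.congr' ?_
  filter_upwards [eventually_gt_atTop (0 : ℝ)] with x hx
  simp only [Pi.inv_apply]
  field_simp
  ring

lemma hasDerivAt_neg_arctan_mul_div_sq_add_sq {p : ℝ} (hp : p ≠ 0) (q x : ℝ) :
    HasDerivAt (fun x => -arctan (q * x) / (2 * (p ^ 2 + x ^ 2)))
      (x * arctan (q * x) / (p ^ 2 + x ^ 2) ^ 2
        - q / 2 * (1 / ((p ^ 2 + x ^ 2) * (1 + (q * x) ^ 2)))) x := by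
  have hpx : p ^ 2 + x ^ 2 ≠ 0 := by positivity
  have hqx : 1 + (q * x) ^ 2 ≠ 0 := by positivity
  have hden : HasDerivAt (fun x => 2 * (p ^ 2 + x ^ 2)) (2 * (2 * x)) x := by
    simpa using ((hasDerivAt_pow 2 x).const_add (p ^ 2)).const_mul 2
  refine ((((hasDerivAt_id x).const_mul q).arctan).neg.div hden (by positivity)).congr_deriv ?_
  simp only [id, Pi.neg_apply]
  field_simp
  ring

lemma hasDerivAt_arctan_div_sub_mul_arctan {p q : ℝ} (hp : p ≠ 0) (hpq : p ^ 2 * q ^ 2 ≠ 1)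
    (x : ℝ) :
    HasDerivAt (fun x => (arctan (p⁻¹ * x) / p - q * arctan (q * x)) / (1 - p ^ 2 * q ^ 2))
      (1 / ((p ^ 2 + x ^ 2) * (1 + (q * x) ^ 2))) x := by
  have hpx : p ^ 2 + x ^ 2 ≠ 0 := by positivity
  have hqx : 1 + (q * x) ^ 2 ≠ 0 := by positivity
  have hpq' : 1 - p ^ 2 * q ^ 2 ≠ 0 := sub_ne_zero.2 (Ne.symm hpq)
  refine (((((hasDerivAt_id x).const_mul p⁻¹).arctan.div_const p).sub
    (((hasDerivAt_id x).const_mul q).arctan.const_mul q)).div_const _).congr_deriv ?_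
  simp only [id]
  field_simp
  ring

lemma hasDerivAt_div_sq_add_sq_add_arctan_div {p : ℝ} (hp : p ≠ 0) (x : ℝ) :
    HasDerivAt (fun x => (x / (p ^ 2 + x ^ 2) + arctan (p⁻¹ * x) / p) / 2)
      (1 / ((p ^ 2 + x ^ 2) * (1 + (p⁻¹ * x) ^ 2))) x := by
  have hpx : p ^ 2 + x ^ 2 ≠ 0 := by positivity
  have hden : HasDerivAt (fun x => p ^ 2 + x ^ 2) (2 * x) x := by
    simpa using (hasDerivAt_pow 2 x).const_add (p ^ 2)
  refine ((((hasDerivAt_id x).div hden hpx).add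
    (((hasDerivAt_id x).const_mul p⁻¹).arctan.div_const p)).div_const 2).congr_deriv ?_
  simp only [id]
  field_simp
  ring

lemma exists_primitive_one_div_sq_add_sq_mul_one_add_sq {p q : ℝ} (hp : 0 < p) (hq : 0 < q) :
    ∃ G : ℝ → ℝ, (∀ x, HasDerivAt G (1 / ((p ^ 2 + x ^ 2) * (1 + (q * x) ^ 2))) x) ∧ G 0 = 0 ∧
      Tendsto G atTop (𝓝 (π / (2 * p * (1 + p * q)))) := by
  rcases eq_or_ne (p * q) 1 with hpq | hpq
  · obtain rfl : q = p⁻¹ := eq_inv_of_mul_eq_one_right hpq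
    refine ⟨_, hasDerivAt_div_sq_add_sq_add_arctan_div hp.ne', by simp, ?_⟩
    convert ((tendsto_div_sq_add_sq_atTop p).add
      ((tendsto_arctan_const_mul_atTop hq).div_const p)).div_const 2 using 2
    field_simp
    ring
  · have hpq' : p ^ 2 * q ^ 2 ≠ 1 := by
      rw [← mul_pow]
      exact fun h => hpq ((pow_eq_one_iff_of_nonneg (by positivity) two_ne_zero).1 h)
    refine ⟨_, hasDerivAt_arctan_div_sub_mul_arctan hp.ne' hpq', by simp, ?_⟩
    convert ((((tendsto_arctan_const_mul_atTop (inv_pos.2 hp)).div_const p).sub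
      ((tendsto_arctan_const_mul_atTop hq).const_mul q)).div_const (1 - p ^ 2 * q ^ 2)) using 2
    have h1 : 1 - p * q ≠ 0 := sub_ne_zero.2 (Ne.symm hpq)
    rw [show 1 - p ^ 2 * q ^ 2 = (1 - p * q) * (1 + p * q) by ring]
    field_simp

theorem integral_mul_arctan_div_sq_add_sq_sq (p q : ℝ) (hp : 0 < p) (hq : 0 < q) :
    ∫ x in Set.Ioi (0 : ℝ), x * arctan (q * x) / (p ^ 2 + x ^ 2) ^ 2
      = π * q / (4 * p * (1 + p * q)) := by
  obtain ⟨G, hG, hG0, hGlim⟩ := exists_primitive_one_div_sq_add_sq_mul_one_add_sq hp hq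
  have hderiv : ∀ x ∈ Set.Ici (0 : ℝ), HasDerivAt
      (fun x => -arctan (q * x) / (2 * (p ^ 2 + x ^ 2)) + q / 2 * G x)
      (x * arctan (q * x) / (p ^ 2 + x ^ 2) ^ 2) x := fun x _ =>
    ((hasDerivAt_neg_arctan_mul_div_sq_add_sq hp.ne' q x).add
      ((hG x).const_mul (q / 2))).congr_deriv (by ring)
  have hnonneg : ∀ x ∈ Set.Ioi (0 : ℝ), 0 ≤ x * arctan (q * x) / (p ^ 2 + x ^ 2) ^ 2 :=
    fun x hx =>
      div_nonneg (mul_nonneg hx.le (arctan_nonneg.2 (mul_nonneg hq.le hx.le))) (by positivity)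
  have hden : Tendsto (fun x : ℝ => 2 * (p ^ 2 + x ^ 2)) atTop atTop :=
    (tendsto_atTop_add_const_left _ _ (tendsto_pow_atTop two_ne_zero)).const_mul_atTop two_pos
  have hlim := ((tendsto_arctan_const_mul_atTop hq).neg.div_atTop hden).add
    (hGlim.const_mul (q / 2))
  rw [integral_Ioi_of_hasDerivAt_of_nonneg' hderiv hnonneg hlim]
  simp only [hG0, mul_zero, arctan_zero, neg_zero, zero_div, zero_add, sub_zero]
  field_simp
  norm_num
end

section
/- For real v with 0 < v < 1 and reals μ > 0, β > 0: ∫₀^∞ x^{v-1} e^{-μx}/(x+β) dx = β^{v-1} e^{βμ} Γ(v) Γ(1-v, βμ), where Γ(·,·) is the upper incomplete gamma function. -/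
/-!
Write `1 / (x + β) = ∫₀^∞ e^{-(x+β)t} dt` and exchange the order of integration. For fixed `t`
the `x`-integral is the Gamma integral `Γ(v) (μ + t)^{-v}`; the substitutions `u = μ + t` and
`s = β u` turn the remaining `t`-integral into `e^{βμ} β^{v-1} Γ(1 - v, βμ)`.
-/

open Real MeasureTheory

/-- The upper incomplete gamma function `Γ(a, z) = ∫_z^∞ t^(a-1) e^(-t) dt`. -/
noncomputable def upperIncompleteGamma (a z : ℝ) : ℝ :=
  ∫ t in Set.Ioi z, t ^ (a - 1) * Real.exp (-t)

open Set

theorem integral_comp_add_right_Ioi {E : Type*} [NormedAddCommGroup E] [NormedSpace ℝ E]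
    (g : ℝ → E) (a c : ℝ) : ∫ x in Ioi a, g (x + c) = ∫ x in Ioi (a + c), g x := by
  simpa [preimage_add_const_Ioi] using
    (measurePreserving_add_right volume c).setIntegral_preimage_emb
      (measurableEmbedding_addRight c) g (Ioi (a + c))

theorem integral_exp_neg_mul_Ioi_zero {c : ℝ} (hc : 0 < c) :
    ∫ t in Ioi (0 : ℝ), exp (-(c * t)) = c⁻¹ := by
  have := integral_exp_mul_Ioi (neg_neg_of_pos hc) 0
  simp only [neg_mul, mul_zero, exp_zero, div_neg] at this
  rw [this, neg_div, neg_neg, one_div]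

theorem integral_rpow_mul_exp_neg_mul_Ioi_eq_upperIncompleteGamma {a β z : ℝ} (hβ : 0 < β)
    (hz : 0 ≤ z) :
    ∫ u in Ioi z, u ^ (a - 1) * exp (-(β * u)) = β ^ (-a) * upperIncompleteGamma a (β * z) := by
  have hsubst := integral_comp_mul_left_Ioi (fun s ↦ s ^ (a - 1) * exp (-s)) z hβ
  have hsplit : ∀ u ∈ Ioi z, (β * u) ^ (a - 1) * exp (-(β * u))
      = β ^ (a - 1) * (u ^ (a - 1) * exp (-(β * u))) := fun u hu ↦ by
    rw [mul_rpow hβ.le (hz.trans (le_of_lt hu)), mul_assoc]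
  rw [setIntegral_congr_fun measurableSet_Ioi hsplit, integral_const_mul, smul_eq_mul] at hsubst
  have hpow : (β ^ (a - 1))⁻¹ * β⁻¹ = β ^ (-a) := by
    rw [← rpow_neg hβ.le, ← rpow_neg_one, ← rpow_add hβ]
    ring_nf
  rw [upperIncompleteGamma,
    ← inv_mul_cancel_left₀ (rpow_pos_of_pos hβ (a - 1)).ne' (∫ u in Ioi z, _), hsubst,
    ← mul_assoc, hpow]

theorem integral_exp_neg_mul_mul_add_rpow_Ioi {a β μ : ℝ} (hβ : 0 < β) (hμ : 0 ≤ μ) :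
    ∫ t in Ioi (0 : ℝ), exp (-(β * t)) * (μ + t) ^ (a - 1)
      = exp (β * μ) * β ^ (-a) * upperIncompleteGamma a (β * μ) := by
  have hshift : ∀ t : ℝ, exp (-(β * t)) * (μ + t) ^ (a - 1)
      = exp (β * μ) * ((t + μ) ^ (a - 1) * exp (-(β * (t + μ)))) := fun t ↦ by
    rw [mul_left_comm, ← exp_add, add_comm t μ, mul_comm]
    ring_nf
  simp_rw [hshift]
  rw [integral_const_mul, integral_comp_add_right_Ioi (fun u ↦ u ^ (a - 1) * exp (-(β * u))),
    zero_add, integral_rpow_mul_exp_neg_mul_Ioi_eq_upperIncompleteGamma hβ hμ, mul_assoc]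

theorem integral_div_add_eq_integral_exp_neg_mul_mul_integral {g : ℝ → ℝ} {β : ℝ} (hβ : 0 < β)
    (hg : IntegrableOn g (Ioi 0)) :
    ∫ x in Ioi (0 : ℝ), g x / (x + β)
      = ∫ t in Ioi (0 : ℝ), exp (-(β * t)) * ∫ x in Ioi (0 : ℝ), g x * exp (-(t * x)) := by
  set ν : Measure ℝ := volume.restrict (Ioi 0)
  set F : ℝ → ℝ → ℝ := fun x t ↦ g x * exp (-((x + β) * t))
  have hslice : ∀ (c : ℝ) {x : ℝ}, 0 < x → ∫ t, c * exp (-((x + β) * t)) ∂ν = c / (x + β) :=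
    fun c x hx ↦ by
      rw [integral_const_mul, integral_exp_neg_mul_Ioi_zero (by linarith), div_eq_mul_inv]
  have hF : Integrable (Function.uncurry F) (ν.prod ν) := by
    have hmeas : AEStronglyMeasurable (Function.uncurry F) (ν.prod ν) :=
      hg.aestronglyMeasurable.comp_fst.mul (by fun_prop : Continuous fun p : ℝ × ℝ ↦
        exp (-((p.1 + β) * p.2))).aestronglyMeasurable
    refine (integrable_prod_iff hmeas).2 ⟨?_, ?_⟩
    · filter_upwards [self_mem_ae_restrict measurableSet_Ioi] with x hx
      simpa only [F, Function.uncurry_apply_pair, neg_mul] using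
        (exp_neg_integrableOn_Ioi 0 (by linarith [mem_Ioi.1 hx] : 0 < x + β)).const_mul (g x)
    · have hbound : ∀ᵐ x ∂ν, ‖(x + β)⁻¹‖ ≤ β⁻¹ := by
        filter_upwards [self_mem_ae_restrict measurableSet_Ioi] with x hx
        rw [norm_inv, Real.norm_of_nonneg (by linarith [mem_Ioi.1 hx])]
        exact inv_anti₀ hβ (by linarith [mem_Ioi.1 hx])
      refine (hg.norm.bdd_mul (by fun_prop) hbound).congr ?_
      filter_upwards [self_mem_ae_restrict measurableSet_Ioi] with x hx
      simp only [F, Function.uncurry_apply_pair, norm_mul, Real.norm_eq_abs (exp _), abs_exp]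
      rw [hslice _ hx, div_eq_inv_mul]
  calc ∫ x in Ioi (0 : ℝ), g x / (x + β) = ∫ x, ∫ t, F x t ∂ν ∂ν :=
        setIntegral_congr_fun measurableSet_Ioi fun x hx ↦ (hslice (g x) hx).symm
    _ = ∫ t, ∫ x, F x t ∂ν ∂ν := integral_integral_swap hF
    _ = _ := by
        congr 1
        funext t
        rw [← integral_const_mul]
        congr 1
        funext x
        simp only [F]
        rw [mul_left_comm, ← exp_add]
        ring_nf

theorem integral_rpow_exp_div_add_general (v μ β : ℝ) (hv0 : 0 < v)
    (hμ : 0 < μ) (hβ : 0 < β) :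
    ∫ x in Set.Ioi (0 : ℝ), x ^ (v - 1) * Real.exp (-(μ * x)) / (x + β)
      = β ^ (v - 1) * Real.exp (β * μ) * Real.Gamma v * upperIncompleteGamma (1 - v) (β * μ) := by
  have hint : IntegrableOn (fun x ↦ x ^ (v - 1) * exp (-(μ * x))) (Ioi 0) := by
    simpa only [rpow_one, neg_mul] using
      integrableOn_rpow_mul_exp_neg_mul_rpow (by linarith) one_pos hμ
  have hlaplace : ∀ t ∈ Ioi (0 : ℝ),
      exp (-(β * t)) * ∫ x in Ioi (0 : ℝ), x ^ (v - 1) * exp (-(μ * x)) * exp (-(t * x))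
        = Gamma v * (exp (-(β * t)) * (μ + t) ^ ((1 - v) - 1)) := fun t ht ↦ by
    have hμt : 0 < μ + t := by linarith [mem_Ioi.1 ht]
    have hmerge : ∀ x : ℝ, x ^ (v - 1) * exp (-(μ * x)) * exp (-(t * x))
        = x ^ (v - 1) * exp (-((μ + t) * x)) := fun x ↦ by
      rw [mul_assoc, ← exp_add]
      ring_nf
    simp_rw [hmerge]
    rw [integral_rpow_mul_exp_neg_mul_Ioi hv0 hμt, one_div, inv_rpow hμt.le, ← rpow_neg hμt.le,
      sub_sub_cancel_left]
    ring
  rw [integral_div_add_eq_integral_exp_neg_mul_mul_integral hβ hint,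
    setIntegral_congr_fun measurableSet_Ioi hlaplace, integral_const_mul,
    integral_exp_neg_mul_mul_add_rpow_Ioi hβ hμ.le, neg_sub]
  ring

theorem integral_rpow_exp_div_add (v μ β : ℝ) (hv0 : 0 < v) (hv1 : v < 1)
    (hμ : 0 < μ) (hβ : 0 < β) :
    ∫ x in Set.Ioi (0 : ℝ), x ^ (v - 1) * Real.exp (-(μ * x)) / (x + β)
      = β ^ (v - 1) * Real.exp (β * μ) * Real.Gamma v * upperIncompleteGamma (1 - v) (β * μ) :=
  integral_rpow_exp_div_add_general v μ β hv0 hμ hβ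
end
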